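/- A countably generated ideal I of a commutative ring R is countable strongly annihilated if and only if I is an annihilator ideal, i.e., I = Ann(J) for some ideal J of R. -/

import Mathlib

/-!
Every ideal lies in its double annihilator, and annihilator ideals are strongly annihilated:
if `b ∉ Ann(J)` then some `j ∈ J` has `j * b ≠ 0` while `j` kills all of `Ann(J)`.
Conversely, if `I` is generated by a countable set `S`, apply the hypothesis to `S` itself:
for `b ∉ I` it yields `c ∈ Ann(I)` with `c * b ≠ 0`, so `b ∉ Ann(Ann(I))`, i.e. `I = Ann(Ann(I))`.
-/

/-- An ideal `I` is countable strongly annihilated if for each countable subset `S ⊆ I`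
and each `b ∉ I` there exists `c` with `c * a = 0` for all `a ∈ S` but `c * b ≠ 0`. -/
def CountableStronglyAnnihilated {R : Type*} [CommRing R] (I : Ideal R) : Prop :=
  ∀ S : Set R, S.Countable → S ⊆ I → ∀ b ∉ I, ∃ c : R, (∀ a ∈ S, c * a = 0) ∧ c * b ≠ 0

open Submodule

theorem Ideal.le_annihilator_annihilator {R : Type*} [CommRing R] (I : Ideal R) :
    I ≤ annihilator (annihilator I) :=
  le_annihilator_iff.2 (mul_annihilator I)

theorem Ideal.countableStronglyAnnihilated_annihilator {R : Type*} [CommRing R] (J : Ideal R) :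
    CountableStronglyAnnihilated (annihilator J) := by
  intro S _ hS b hb
  obtain ⟨j, hj, hjb⟩ : ∃ j ∈ J, b * j ≠ 0 := by simpa [mem_annihilator] using hb
  refine ⟨j, fun a ha => ?_, by rwa [mul_comm]⟩
  rw [mul_comm]
  exact mem_annihilator.1 (hS ha) j hj

theorem CountableStronglyAnnihilated.annihilator_annihilator_span {R : Type*} [CommRing R]
    {S : Set R} (h : CountableStronglyAnnihilated (Ideal.span S)) (hS : S.Countable) :
    annihilator (annihilator (Ideal.span S)) = Ideal.span S := by
  refine le_antisymm (fun b hb => ?_) (Ideal.le_annihilator_annihilator _)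
  by_contra hbS
  obtain ⟨c, hcS, hcb⟩ := h S hS Ideal.subset_span b hbS
  have hc : c ∈ annihilator (Ideal.span S) :=
    (mem_annihilator_span S c).2 fun a => hcS a a.2
  exact hcb (by rw [mul_comm]; exact mem_annihilator.1 hb c hc)

theorem stmt13 {R : Type*} [CommRing R] (I : Ideal R)
    (hgen : ∃ S : Set R, S.Countable ∧ I = Ideal.span S) :
    CountableStronglyAnnihilated I ↔ ∃ J : Ideal R, I = Submodule.annihilator J := by
  obtain ⟨S, hS, rfl⟩ := hgen
  refine ⟨fun h => ⟨_, (h.annihilator_annihilator_span hS).symm⟩, ?_⟩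
  rintro ⟨J, hJ⟩
  exact hJ ▸ Ideal.countableStronglyAnnihilated_annihilator J
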